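/- For complex parameters with $\mathrm{Re}\,c > \mathrm{Re}\,b > 0$ and $x \in \mathbb{C}\setminus[1,\infty)$, the Gauss hypergeometric function satisfies Euler's integral representation: ${}_2F_1(a,b;c;x) = \frac{\Gamma(c)}{\Gamma(b)\Gamma(c-b)}\int_0^1 t^{b-1}(1-t)^{c-b-1}(1-xt)^{-a}\,dt$. -/

import Mathlib

open MeasureTheory
/-- The Gauss hypergeometric series `₂F₁(a,b;c;x) = ∑ (a)_k (b)_k / ((c)_k k!) x^k`. -/
noncomputable def hyp2F1Series (a b c x : ℂ) : ℂ :=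
  ∑' k : ℕ, ((ascPochhammer ℂ k).eval a * (ascPochhammer ℂ k).eval b
    / ((ascPochhammer ℂ k).eval c * (k.factorial : ℂ))) * x ^ k

/-- `F` is (the analytic continuation of) the Gauss hypergeometric function `₂F₁(a,b;c;·)`
on `ℂ \ [1,∞)`: it is holomorphic off the cut `[1,∞)` and agrees with the Gauss series
on the unit disc. -/
def IsHyp2F1 (a b c : ℂ) (F : ℂ → ℂ) : Prop :=
  DifferentiableOn ℂ F {z : ℂ | z.im ≠ 0 ∨ z.re < 1} ∧
    ∀ x : ℂ, ‖x‖ < 1 → F x = hyp2F1Series a b c x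

/-! For `‖x‖ < 1`, expand `(1 - x t) ^ (-a)` by the binomial series and integrate term by term:
the `k`-th term is a Beta integral, `B(b + k, c - b) = Γ(b) Γ(c - b) / Γ(c) · (b)_k / (c)_k`, and
the result is the Gauss series. The Euler integral is holomorphic in `x` off the cut `[1, ∞)`
(differentiation under the integral sign, with bounds coming from compactness), and the cut plane
is connected, so the identity theorem extends the equality from the unit disc. -/

open Complex Set

theorem Ring.choose_add_natCast_sub_one {K : Type*} [Field K] [CharZero K] (a : K) (n : ℕ) :
    Ring.choose (a + n - 1) n = (ascPochhammer K n).eval a / n.factorial := by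
  rw [Ring.choose_eq_smul, Polynomial.descPochhammer_smeval_eq_ascPochhammer,
    Polynomial.ascPochhammer_smeval_eq_eval, show a + n - 1 - n + 1 = a by ring, smul_eq_mul,
    inv_mul_eq_div]

namespace Complex

theorem one_sub_cpow_neg_hasFPowerSeriesOnBall_zero (a : ℂ) :
    HasFPowerSeriesOnBall (fun z ↦ (1 - z) ^ (-a))
      (.ofScalars ℂ fun n ↦ (ascPochhammer ℂ n).eval a / n.factorial) 0 1 := by
  simpa [cpow_neg, Ring.choose_add_natCast_sub_one] using
    one_div_one_sub_cpow_hasFPowerSeriesOnBall_zero a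

lemma mem_eball_zero_one_of_norm_lt_one {z : ℂ} (hz : ‖z‖ < 1) : z ∈ Metric.eball (0 : ℂ) 1 := by
  rw [← ENNReal.ofReal_one, Metric.eball_ofReal]
  simpa using hz

theorem hasSum_ascPochhammer_div_factorial_mul_pow (a : ℂ) {z : ℂ} (hz : ‖z‖ < 1) :
    HasSum (fun n ↦ (ascPochhammer ℂ n).eval a / n.factorial * z ^ n) ((1 - z) ^ (-a)) := by
  simpa [mul_comm] using
    (one_sub_cpow_neg_hasFPowerSeriesOnBall_zero a).hasSum (mem_eball_zero_one_of_norm_lt_one hz)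

theorem summable_norm_ascPochhammer_div_factorial_mul_pow (a : ℂ) {r : ℝ} (h0 : 0 ≤ r)
    (hr : r < 1) :
    Summable (fun n ↦ ‖(ascPochhammer ℂ n).eval a / n.factorial‖ * r ^ n) := by
  have hp := one_sub_cpow_neg_hasFPowerSeriesOnBall_zero a
  have hr' : (r : ℂ) ∈ Metric.eball 0 1 :=
    mem_eball_zero_one_of_norm_lt_one (by simpa [abs_of_nonneg h0])
  have := FormalMultilinearSeries.summable_norm_apply _ (Metric.eball_subset_eball hp.r_le hr')
  simpa [FormalMultilinearSeries.ofScalars_apply_eq, abs_of_nonneg h0, mul_comm] using this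

theorem preimage_one_sub_slitPlane :
    (1 - ·) ⁻¹' slitPlane = {z : ℂ | z.im ≠ 0 ∨ z.re < 1} := by
  ext z
  rw [mem_preimage, mem_slitPlane_iff, sub_re, one_re, sub_im, one_im, zero_sub, neg_ne_zero,
    sub_pos, or_comm]
  rfl

theorem one_sub_mul_ofReal_mem_slitPlane {z : ℂ} (hz : 1 - z ∈ slitPlane) {t : ℝ}
    (ht : t ∈ Icc (0 : ℝ) 1) : 1 - z * t ∈ slitPlane := by
  have h := starConvex_one_slitPlane.add_smul_mem (y := -z) (by rwa [← sub_eq_add_neg]) ht.1 ht.2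
  rwa [real_smul, mul_neg, ← sub_eq_add_neg, mul_comm] at h

theorem isOpen_preimage_one_sub_slitPlane : IsOpen ((1 - ·) ⁻¹' slitPlane : Set ℂ) :=
  isOpen_slitPlane.preimage (by fun_prop)

theorem isPreconnected_preimage_one_sub_slitPlane :
    IsPreconnected ((1 - ·) ⁻¹' slitPlane : Set ℂ) := by
  rw [← Function.Involutive.image_eq_preimage_symm (sub_sub_cancel (1 : ℂ))]
  exact (starConvex_one_slitPlane.isPathConnected one_mem_slitPlane).isConnected.isPreconnected
    |>.image _ (by fun_prop)

theorem integrableOn_cpow_mul_one_sub_cpow {u v : ℂ} (hu : 0 < u.re) (hv : 0 < v.re) :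
    IntegrableOn (fun t : ℝ ↦ (t : ℂ) ^ (u - 1) * (1 - (t : ℂ)) ^ (v - 1)) (Ioo 0 1) :=
  (betaIntegral_convergent hu hv).1.mono_set Ioo_subset_Ioc_self

theorem betaIntegral_add_natCast (u v : ℂ) (k : ℕ) :
    betaIntegral (u + k) v =
      ∫ t in Ioo (0 : ℝ) 1, (t : ℂ) ^ (u - 1) * (1 - (t : ℂ)) ^ (v - 1) * (t : ℂ) ^ k := by
  rw [betaIntegral, intervalIntegral.integral_of_le zero_le_one, integral_Ioc_eq_integral_Ioo]
  refine setIntegral_congr_fun measurableSet_Ioo fun t ht ↦ ?_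
  have ht0 : (t : ℂ) ≠ 0 := ofReal_ne_zero.mpr ht.1.ne'
  rw [add_sub_right_comm, cpow_add _ _ ht0, cpow_natCast]
  ring

theorem Gamma_div_mul_betaIntegral_add_natCast {b c : ℂ} (hb : 0 < b.re) (hcb : b.re < c.re)
    (k : ℕ) :
    Gamma c / (Gamma b * Gamma (c - b)) * betaIntegral (b + k) (c - b) =
      (ascPochhammer ℂ k).eval b / (ascPochhammer ℂ k).eval c := by
  have hc : 0 < c.re := hb.trans hcb
  have hcb' : 0 < (c - b).re := by rw [sub_re]; linarith
  have hbk : 0 < (b + k).re := by rw [add_re, natCast_re]; positivity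
  have ne_neg_nat : ∀ {z : ℂ}, 0 < z.re → ∀ m : ℕ, z ≠ -m := fun hz m h ↦ by
    rw [h, neg_re, natCast_re] at hz
    linarith [m.cast_nonneg (α := ℝ)]
  have hβ := Gamma_mul_Gamma_eq_betaIntegral hbk hcb'
  rw [show b + k + (c - b) = c + k by ring] at hβ
  rw [← Gamma_add_nat_div_Gamma_eq b (ne_neg_nat hb),
    ← Gamma_add_nat_div_Gamma_eq c (ne_neg_nat hc)]
  have hΓb := Gamma_ne_zero_of_re_pos hb
  have hΓc := Gamma_ne_zero_of_re_pos hc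
  have hΓcb := Gamma_ne_zero_of_re_pos hcb'
  have hΓck : Gamma (c + k) ≠ 0 := Gamma_ne_zero_of_re_pos (by rw [add_re, natCast_re]; positivity)
  field_simp
  linear_combination -hβ

end Complex

section ParametricIntegral

variable {φ : ℝ → ℂ} {z z₀ : ℂ}

theorem continuousOn_cpow_one_sub_mul (s : ℂ) (hz : 1 - z ∈ slitPlane) :
    ContinuousOn (fun t : ℝ ↦ (1 - z * t) ^ s) (Icc 0 1) := fun t ht ↦
  (ContinuousAt.cpow (f := fun t : ℝ ↦ 1 - z * t) (by fun_prop) continuousAt_const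
    (one_sub_mul_ofReal_mem_slitPlane hz ht)).continuousWithinAt

theorem MeasureTheory.IntegrableOn.mul_cpow_one_sub_mul (hφ : IntegrableOn φ (Ioo 0 1)) (s : ℂ)
    (hz : 1 - z ∈ slitPlane) :
    IntegrableOn (fun t ↦ φ t * (1 - z * t) ^ s) (Ioo 0 1) :=
  hφ.mul_continuousOn_of_subset (continuousOn_cpow_one_sub_mul s hz) measurableSet_Ioo
    isCompact_Icc Ioo_subset_Icc_self

theorem exists_norm_cpow_one_sub_mul_le (s : ℂ) (hz₀ : 1 - z₀ ∈ slitPlane) :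
    ∃ ε > 0, ∃ C, ∀ z ∈ Metric.closedBall z₀ ε, 1 - z ∈ slitPlane ∧
      ∀ t ∈ Icc (0 : ℝ) 1, ‖(1 - z * t) ^ s‖ ≤ C := by
  obtain ⟨ε, hε, hball⟩ := Metric.nhds_basis_closedBall.mem_iff.mp
    (isOpen_preimage_one_sub_slitPlane.mem_nhds hz₀)
  have hcont : ContinuousOn (fun p : ℂ × ℝ ↦ (1 - p.1 * p.2) ^ s)
      (Metric.closedBall z₀ ε ×ˢ Icc 0 1) := fun p hp ↦
    (ContinuousAt.cpow (f := fun p : ℂ × ℝ ↦ 1 - p.1 * p.2) (by fun_prop) continuousAt_const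
      (one_sub_mul_ofReal_mem_slitPlane (hball hp.1) hp.2)).continuousWithinAt
  obtain ⟨C, hC⟩ :=
    ((isCompact_closedBall z₀ ε).prod isCompact_Icc).exists_bound_of_continuousOn hcont
  exact ⟨ε, hε, C, fun z hz ↦ ⟨hball hz, fun t ht ↦ hC (z, t) ⟨hz, ht⟩⟩⟩

theorem differentiableOn_integral_mul_cpow_one_sub_mul (hφ : IntegrableOn φ (Ioo 0 1))
    (s : ℂ) :
    DifferentiableOn ℂ (fun z ↦ ∫ t in Ioo (0 : ℝ) 1, φ t * (1 - z * t) ^ s)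
      ((1 - ·) ⁻¹' slitPlane) := by
  intro z₀ hz₀
  obtain ⟨ε, hε, C, hC⟩ := exists_norm_cpow_one_sub_mul_le (s - 1) hz₀
  refine (hasDerivAt_integral_of_dominated_loc_of_deriv_le (μ := volume.restrict (Ioo 0 1))
    (F := fun z t ↦ φ t * (1 - z * t) ^ s)
    (F' := fun z t ↦ φ t * (s * (1 - z * t) ^ (s - 1) * -t))
    (bound := fun t ↦ ‖φ t‖ * (‖s‖ * C)) (Metric.ball_mem_nhds z₀ hε)
    ?_ (hφ.mul_cpow_one_sub_mul s hz₀) ?_ ?_ (hφ.norm.mul_const _) ?_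
    ).2.differentiableAt.differentiableWithinAt
  · filter_upwards [isOpen_preimage_one_sub_slitPlane.mem_nhds hz₀] with z hz
    exact (hφ.mul_cpow_one_sub_mul s hz).aestronglyMeasurable
  · refine (hφ.mul_continuousOn_of_subset (K := Icc 0 1) ?_ measurableSet_Ioo isCompact_Icc
      Ioo_subset_Icc_self).aestronglyMeasurable
    exact ((continuousOn_cpow_one_sub_mul (s - 1) hz₀).const_smul s).mul (by fun_prop)
  · rw [ae_restrict_iff' measurableSet_Ioo]
    refine .of_forall fun t ht z hz ↦ ?_
    have ht' : t ∈ Icc (0 : ℝ) 1 := Ioo_subset_Icc_self ht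
    have hzt := (hC z (Metric.ball_subset_closedBall hz)).2 t ht'
    have ht1 : ‖(t : ℂ)‖ ≤ 1 := by simpa [abs_of_nonneg ht'.1] using ht'.2
    have hC0 : 0 ≤ C := (norm_nonneg _).trans hzt
    simp only [norm_mul, norm_neg]
    calc ‖φ t‖ * (‖s‖ * ‖(1 - z * t) ^ (s - 1)‖ * ‖(t : ℂ)‖)
        ≤ ‖φ t‖ * (‖s‖ * C * 1) := by gcongr
      _ = ‖φ t‖ * (‖s‖ * C) := by rw [mul_one]
  · rw [ae_restrict_iff' measurableSet_Ioo]
    refine .of_forall fun t ht z hz ↦ ?_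
    have hzt := one_sub_mul_ofReal_mem_slitPlane (hC z (Metric.ball_subset_closedBall hz)).1
      (Ioo_subset_Icc_self ht)
    exact (((hasDerivAt_mul_const (t : ℂ)).const_sub 1).cpow_const hzt).const_mul (φ t)

theorem integral_mul_cpow_one_sub_mul_neg_eq_tsum (hφ : IntegrableOn φ (Ioo 0 1)) (a : ℂ)
    {x : ℂ} (hx : ‖x‖ < 1) :
    ∫ t in Ioo (0 : ℝ) 1, φ t * (1 - x * t) ^ (-a) =
      ∑' k : ℕ, (ascPochhammer ℂ k).eval a / k.factorial * x ^ k *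
        ∫ t in Ioo (0 : ℝ) 1, φ t * (t : ℂ) ^ k := by
  set c : ℕ → ℂ := fun k ↦ (ascPochhammer ℂ k).eval a / k.factorial
  set G : ℕ → ℝ → ℂ := fun k t ↦ c k * x ^ k * (φ t * (t : ℂ) ^ k)
  have hnorm_t : ∀ t ∈ Ioo (0 : ℝ) 1, ‖(t : ℂ)‖ ≤ 1 := fun t ht ↦ by
    simpa [abs_of_pos ht.1] using ht.2.le
  have hG_sum : ∀ t ∈ Ioo (0 : ℝ) 1, HasSum (fun k ↦ G k t) (φ t * (1 - x * t) ^ (-a)) := by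
    intro t ht
    have hxt : ‖x * t‖ < 1 := by
      rw [norm_mul]
      exact (mul_le_of_le_one_right (norm_nonneg x) (hnorm_t t ht)).trans_lt hx
    refine ((hasSum_ascPochhammer_div_factorial_mul_pow a hxt).mul_left (φ t)).congr_fun
      fun k ↦ ?_
    simp only [G, c, mul_pow]
    ring
  have hG_int : ∀ k, Integrable (G k) (volume.restrict (Ioo 0 1)) := fun k ↦
    (hφ.mul_continuousOn_of_subset (K := Icc 0 1) (by fun_prop) measurableSet_Ioo
      isCompact_Icc Ioo_subset_Icc_self).const_mul _
  have hG_norm : Summable fun k ↦ ∫ t in Ioo (0 : ℝ) 1, ‖G k t‖ := by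
    refine .of_nonneg_of_le (fun k ↦ integral_nonneg fun t ↦ norm_nonneg _) (fun k ↦ ?_)
      ((summable_norm_ascPochhammer_div_factorial_mul_pow a (norm_nonneg x) hx).mul_right
        (∫ t in Ioo (0 : ℝ) 1, ‖φ t‖))
    rw [← integral_const_mul]
    refine setIntegral_mono_on (hG_int k).norm (hφ.norm.const_mul _) measurableSet_Ioo
      fun t ht ↦ ?_
    simp only [G, norm_mul, norm_pow]
    calc ‖c k‖ * ‖x‖ ^ k * (‖φ t‖ * ‖(t : ℂ)‖ ^ k) ≤ ‖c k‖ * ‖x‖ ^ k * (‖φ t‖ * 1) := by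
          gcongr
          exact pow_le_one₀ (norm_nonneg _) (hnorm_t t ht)
      _ = ‖c k‖ * ‖x‖ ^ k * ‖φ t‖ := by rw [mul_one]
  calc ∫ t in Ioo (0 : ℝ) 1, φ t * (1 - x * t) ^ (-a)
      = ∫ t in Ioo (0 : ℝ) 1, ∑' k, G k t :=
        setIntegral_congr_fun measurableSet_Ioo fun t ht ↦ (hG_sum t ht).tsum_eq.symm
    _ = ∑' k, ∫ t in Ioo (0 : ℝ) 1, G k t :=
        (integral_tsum_of_summable_integral_norm hG_int hG_norm).symm
    _ = _ := tsum_congr fun k ↦ integral_const_mul _ _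

end ParametricIntegral

theorem euler_integral_eq_hyp2F1Series {a b c x : ℂ} (hb : 0 < b.re) (hcb : b.re < c.re)
    (hx : ‖x‖ < 1) :
    Gamma c / (Gamma b * Gamma (c - b)) *
        ∫ t in Ioo (0 : ℝ) 1,
          (t : ℂ) ^ (b - 1) * (1 - (t : ℂ)) ^ (c - b - 1) * (1 - x * t) ^ (-a) =
      hyp2F1Series a b c x := by
  have hcb' : 0 < (c - b).re := by rw [sub_re]; linarith
  rw [integral_mul_cpow_one_sub_mul_neg_eq_tsum (integrableOn_cpow_mul_one_sub_cpow hb hcb') a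
    hx, ← tsum_mul_left, hyp2F1Series]
  refine tsum_congr fun k ↦ ?_
  rw [← betaIntegral_add_natCast, mul_left_comm, Gamma_div_mul_betaIntegral_add_natCast hb hcb k]
  ring

/-- Euler's integral representation of the Gauss hypergeometric function:
for `Re c > Re b > 0` and `x ∉ [1,∞)`,
`₂F₁(a,b;c;x) = Γ(c)/(Γ(b)Γ(c-b)) ∫_0^1 t^{b-1} (1-t)^{c-b-1} (1-xt)^{-a} dt`. -/
theorem hyp2F1_eq_euler_integral
    (a b c x : ℂ) (hb : 0 < b.re) (hcb : b.re < c.re)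
    (hx : x.im ≠ 0 ∨ x.re < 1)
    (F : ℂ → ℂ) (hF : IsHyp2F1 a b c F) :
    F x = Complex.Gamma c / (Complex.Gamma b * Complex.Gamma (c - b))
        * ∫ t in Set.Ioo (0 : ℝ) 1,
            (t : ℂ) ^ (b - 1) * (1 - (t : ℂ)) ^ (c - b - 1) * (1 - x * t) ^ (-a) := by
  obtain ⟨hF_diff, hF_series⟩ := hF
  have hcb' : 0 < (c - b).re := by rw [sub_re]; linarith
  rw [← preimage_one_sub_slitPlane] at hF_diff
  have hE_diff := (differentiableOn_integral_mul_cpow_one_sub_mul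
    (integrableOn_cpow_mul_one_sub_cpow hb hcb') (-a)).const_mul
    (Gamma c / (Gamma b * Gamma (c - b)))
  have hU := isOpen_preimage_one_sub_slitPlane
  refine (hF_diff.analyticOnNhd hU).eqOn_of_preconnected_of_eventuallyEq
    (hE_diff.analyticOnNhd hU) isPreconnected_preimage_one_sub_slitPlane (z₀ := 0)
    (by simp [one_mem_slitPlane]) ?_ (by rwa [preimage_one_sub_slitPlane])
  filter_upwards [Metric.ball_mem_nhds (0 : ℂ) one_pos] with y hy
  rw [mem_ball_zero_iff] at hy
  rw [hF_series y hy, euler_integral_eq_hyp2F1Series hb hcb hy]
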